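/- Soundness of the negative abstraction of the same_quad guard of winding_number_edge: let tx, ty, nx, ny and t̃x, t̃y, ñx, ñy be real numbers and etx, ety, enx, eny be round-off error bounds with |t̃x − tx| ≤ etx, |t̃y − ty| ≤ ety, |ñx − nx| ≤ enx, |ñy − ny| ≤ eny. Define same_quad(a,b,c,d) := (a ≥ 0 ∧ b ≥ 0 ∧ c ≥ 0 ∧ d ≥ 0) ∨ (a ≤ 0 ∧ b ≥ 0 ∧ c ≤ 0 ∧ d ≥ 0) ∨ (a ≥ 0 ∧ b ≤ 0 ∧ c ≥ 0 ∧ d ≤ 0) ∨ (a ≤ 0 ∧ b ≤ 0 ∧ c ≤ 0 ∧ d ≤ 0). If (t̃x < −etx ∨ t̃y < −ety ∨ ñx < −enx ∨ ñy < −eny) ∧ (t̃x > etx ∨ t̃y < −ety ∨ ñx > enx ∨ ñy < −eny) ∧ (t̃x < −etx ∨ t̃y > ety ∨ ñx < −enx ∨ ñy > eny) ∧ (t̃x > etx ∨ t̃y > ety ∨ ñx > enx ∨ ñy > eny), then same_quad(t̃x, t̃y, ñx, ñy) is false and same_quad(tx, ty, nx, ny) is false. -/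

import Mathlib

/-!
`¬ same_quad` is, by De Morgan, a conjunction of four disjunctions of strict sign conditions, and
the abstraction replaces each `x < 0` (resp. `0 < x`) by `x' < -e` (resp. `e < x'`). When
`|x' - x| ≤ e`, such a tightened test fixes the strict sign of both `x'` and `x`, so the
abstraction implies the exact negation for the floating-point and for the real values alike.
-/

/-- The same_quad guard of winding_number_edge: the two translated vertices
lie in the same quadrant. -/
def same_quad (a b c d : ℝ) : Prop :=
  (a ≥ 0 ∧ b ≥ 0 ∧ c ≥ 0 ∧ d ≥ 0) ∨ (a ≤ 0 ∧ b ≥ 0 ∧ c ≤ 0 ∧ d ≥ 0) ∨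
  (a ≥ 0 ∧ b ≤ 0 ∧ c ≥ 0 ∧ d ≤ 0) ∨ (a ≤ 0 ∧ b ≤ 0 ∧ c ≤ 0 ∧ d ≤ 0)

theorem not_same_quad_iff (a b c d : ℝ) :
    ¬ same_quad a b c d ↔
      (a < 0 ∨ b < 0 ∨ c < 0 ∨ d < 0) ∧ (0 < a ∨ b < 0 ∨ 0 < c ∨ d < 0) ∧
      (a < 0 ∨ 0 < b ∨ c < 0 ∨ 0 < d) ∧ (0 < a ∨ 0 < b ∨ 0 < c ∨ 0 < d) := by
  simp only [same_quad, ge_iff_le, not_or, not_and_or, not_le]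

def CertifiesSign (x' e x : ℝ) : Prop :=
  (x' < -e → x < 0) ∧ (e < x' → 0 < x)

section CertifiesSign

variable {x' e x : ℝ}

theorem CertifiesSign.of_abs_sub_le (h : |x' - x| ≤ e) : CertifiesSign x' e x := by
  obtain ⟨hlo, hhi⟩ := abs_le.1 h
  exact ⟨fun _ ↦ by linarith, fun _ ↦ by linarith⟩

theorem CertifiesSign.self (he : 0 ≤ e) : CertifiesSign x' e x' :=
  ⟨fun _ ↦ by linarith, fun _ ↦ by linarith⟩

end CertifiesSign

theorem not_same_quad_of_certifiesSign {a b c d a' b' c' d' ea eb ec ed : ℝ}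
    (ha : CertifiesSign a' ea a) (hb : CertifiesSign b' eb b)
    (hc : CertifiesSign c' ec c) (hd : CertifiesSign d' ed d)
    (h : (a' < -ea ∨ b' < -eb ∨ c' < -ec ∨ d' < -ed) ∧
         (a' > ea ∨ b' < -eb ∨ c' > ec ∨ d' < -ed) ∧
         (a' < -ea ∨ b' > eb ∨ c' < -ec ∨ d' > ed) ∧
         (a' > ea ∨ b' > eb ∨ c' > ec ∨ d' > ed)) :
    ¬ same_quad a b c d := by
  obtain ⟨h1, h2, h3, h4⟩ := h
  exact (not_same_quad_iff a b c d).2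
    ⟨h1.imp ha.1 (.imp hb.1 (.imp hc.1 hd.1)), h2.imp ha.2 (.imp hb.1 (.imp hc.2 hd.1)),
      h3.imp ha.1 (.imp hb.2 (.imp hc.1 hd.2)), h4.imp ha.2 (.imp hb.2 (.imp hc.2 hd.2))⟩

/-- Soundness of the negative abstraction of the same_quad guard. -/
theorem same_quad_beta_neg_sound
    (tx ty nx ny ftx fty fnx fny etx ety enx eny : ℝ)
    (htx : |ftx - tx| ≤ etx) (hty : |fty - ty| ≤ ety)
    (hnx : |fnx - nx| ≤ enx) (hny : |fny - ny| ≤ eny)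
    (h : (ftx < -etx ∨ fty < -ety ∨ fnx < -enx ∨ fny < -eny) ∧
         (ftx > etx ∨ fty < -ety ∨ fnx > enx ∨ fny < -eny) ∧
         (ftx < -etx ∨ fty > ety ∨ fnx < -enx ∨ fny > eny) ∧
         (ftx > etx ∨ fty > ety ∨ fnx > enx ∨ fny > eny)) :
    ¬ same_quad ftx fty fnx fny ∧ ¬ same_quad tx ty nx ny := by
  have self {x' x e : ℝ} (h : |x' - x| ≤ e) : CertifiesSign x' e x' :=
    .self ((abs_nonneg _).trans h)
  exact ⟨not_same_quad_of_certifiesSign (self htx) (self hty) (self hnx) (self hny) h,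
    not_same_quad_of_certifiesSign (.of_abs_sub_le htx) (.of_abs_sub_le hty)
      (.of_abs_sub_le hnx) (.of_abs_sub_le hny) h⟩
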